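/- Let I ⊆ ℝ be an interval and let (a,b,c) : I → ℝ³ be a differentiable solution of the gauged bracket Bach flow. Then the function t ↦ a(t)² + b(t)² + c(t)² is nonincreasing on I; in particular a solution starting at time 0 remains in the closed Euclidean ball of radius √(a(0)² + b(0)² + c(0)²) for all later times in I. -/

import Mathlib

/-- First component of the right-hand side `F` of the gauged bracket Bach flow. -/
noncomputable def Fa (a b c : ℝ) : ℝ :=
  -(a / 48) * (44*a^4 + 72*a^2*b^2 - 5*a^2*c^2 + 28*b^4 + 24*b^2*c^2 - 4*c^4)

/-- Second component of the right-hand side `F` of the gauged bracket Bach flow. -/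
noncomputable def Fb (a b c : ℝ) : ℝ :=
  -(b / 48) * (60*a^4 + 104*a^2*b^2 + 57*a^2*c^2 + 44*b^4 + 104*b^2*c^2 + 60*c^4)

/-- Third component of the right-hand side `F` of the gauged bracket Bach flow. -/
noncomputable def Fc (a b c : ℝ) : ℝ :=
  -(c / 48) * (-4*a^4 + 24*a^2*b^2 - 5*a^2*c^2 + 28*b^4 + 72*b^2*c^2 + 44*c^4)

/-- `(a,b,c) : ℝ → ℝ³` is a differentiable solution of the gauged bracket Bach
flow on the set `S ⊆ ℝ`. -/
def IsBachFlowSolution (a b c : ℝ → ℝ) (S : Set ℝ) : Prop :=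
  ∀ t ∈ S,
    HasDerivAt a (Fa (a t) (b t) (c t)) t ∧
    HasDerivAt b (Fb (a t) (b t) (c t)) t ∧
    HasDerivAt c (Fc (a t) (b t) (c t)) t

/-! Along the flow, `d/dt (a² + b² + c²) = -bachCubic (a²) (b²) (c²) / 24`. On the nonnegative
octant the cubic form `bachCubic` is nonnegative: its only negative coefficients, those of `x²z`
and `xz²`, are dominated by the `x³ + z³` terms because `x²z + xz² ≤ x³ + z³` for `x, z ≥ 0`. -/

def bachCubic (x y z : ℝ) : ℝ :=
  44 * (x ^ 3 + y ^ 3 + z ^ 3) + 132 * (x ^ 2 * y + x * y ^ 2 + y ^ 2 * z + y * z ^ 2)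
    - 9 * (x ^ 2 * z + x * z ^ 2) + 105 * (x * y * z)

lemma sq_mul_add_mul_sq_le_cube_add_cube {x z : ℝ} (hx : 0 ≤ x) (hz : 0 ≤ z) :
    x ^ 2 * z + x * z ^ 2 ≤ x ^ 3 + z ^ 3 := by
  nlinarith [mul_nonneg (add_nonneg hx hz) (sq_nonneg (x - z))]

lemma bachCubic_nonneg {x y z : ℝ} (hx : 0 ≤ x) (hy : 0 ≤ y) (hz : 0 ≤ z) :
    0 ≤ bachCubic x y z := by
  have hxz := sq_mul_add_mul_sq_le_cube_add_cube hx hz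
  unfold bachCubic
  have hxz_cubes : 0 ≤ x ^ 3 + z ^ 3 := by positivity
  have hrest : 0 ≤ 44 * y ^ 3 + 132 * (x ^ 2 * y + x * y ^ 2 + y ^ 2 * z + y * z ^ 2)
      + 105 * (x * y * z) := by
    positivity
  linarith

lemma inner_bachFlow_eq (a b c : ℝ) :
    a * Fa a b c + b * Fb a b c + c * Fc a b c = -bachCubic (a ^ 2) (b ^ 2) (c ^ 2) / 48 := by
  unfold Fa Fb Fc bachCubic
  ring

lemma inner_bachFlow_nonpos (a b c : ℝ) : a * Fa a b c + b * Fb a b c + c * Fc a b c ≤ 0 := by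
  rw [inner_bachFlow_eq]
  have := bachCubic_nonneg (sq_nonneg a) (sq_nonneg b) (sq_nonneg c)
  linarith

lemma IsBachFlowSolution.hasDerivAt_normSq {a b c : ℝ → ℝ} {S : Set ℝ}
    (hsol : IsBachFlowSolution a b c S) {t : ℝ} (ht : t ∈ S) :
    HasDerivAt (fun t => a t ^ 2 + b t ^ 2 + c t ^ 2)
      (2 * (a t * Fa (a t) (b t) (c t) + b t * Fb (a t) (b t) (c t)
        + c t * Fc (a t) (b t) (c t))) t := by
  obtain ⟨ha, hb, hc⟩ := hsol t ht
  refine (((ha.fun_pow 2).fun_add (hb.fun_pow 2)).fun_add (hc.fun_pow 2)).congr_deriv ?_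
  norm_num
  ring

lemma Set.OrdConnected.antitoneOn_of_hasDerivAt_nonpos {D : Set ℝ} (hD : D.OrdConnected)
    {f f' : ℝ → ℝ} (hf : ∀ x ∈ D, HasDerivAt f (f' x) x) (hf' : ∀ x ∈ D, f' x ≤ 0) :
    AntitoneOn f D :=
  antitoneOn_of_hasDerivWithinAt_nonpos hD.convex
    (fun x hx => (hf x hx).continuousAt.continuousWithinAt)
    (fun x hx => (hf x (interior_subset hx)).hasDerivWithinAt)
    (fun x hx => hf' x (interior_subset hx))

/-- along a solution of the gauged bracket Bach flow on an interval,
the squared norm `a² + b² + c²` is nonincreasing; in particular a solution starting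
at time `0` remains in the closed Euclidean ball of radius `√(a(0)² + b(0)² + c(0)²)`
for all later times in the interval. -/
theorem norm_sq_antitone (I : Set ℝ) (hI : I.OrdConnected) (a b c : ℝ → ℝ)
    (hsol : IsBachFlowSolution a b c I) :
    AntitoneOn (fun t => a t ^ 2 + b t ^ 2 + c t ^ 2) I ∧
    (0 ∈ I → ∀ t ∈ I, 0 ≤ t →
      a t ^ 2 + b t ^ 2 + c t ^ 2 ≤ a 0 ^ 2 + b 0 ^ 2 + c 0 ^ 2) := by
  have hanti : AntitoneOn (fun t => a t ^ 2 + b t ^ 2 + c t ^ 2) I :=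
    hI.antitoneOn_of_hasDerivAt_nonpos (fun t ht => hsol.hasDerivAt_normSq ht)
      (fun t _ => mul_nonpos_of_nonneg_of_nonpos zero_le_two (inner_bachFlow_nonpos _ _ _))
  exact ⟨hanti, fun h0 t ht ht0 => hanti h0 ht ht0⟩
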